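/- For softmax probabilities with random coefficients β ~ N(β̂, Σ), the expectation E[π_h] is bounded below by E^{lb}(π_h) = exp(β̂'v_h) / ∑_{i=1}^n exp(β̂'v_i + ½(v_i − v_h)'Σ(v_i − v_h)). -/

import Mathlib

open Matrix Finset MeasureTheory Real

theorem jensen_inv_aux {Ω : Type*} [MeasureSpace Ω] (P : Measure Ω) [IsProbabilityMeasure P]
    (D : Ω → ℝ) (hD : Measurable D) (hD1 : ∀ ω, 1 ≤ D ω) (hDi : Integrable D P) :
    (∫ ω, D ω ∂P)⁻¹ ≤ ∫ ω, (D ω)⁻¹ ∂P := by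
  have hDpos : ∀ ω, 0 < D ω := fun ω => lt_of_lt_of_le one_pos (hD1 ω)
  have hinv_meas : Measurable fun ω => (D ω)⁻¹ := hD.inv
  have hinv_int : Integrable (fun ω => (D ω)⁻¹) P := by
    refine (integrable_const (1:ℝ)).mono' hinv_meas.aestronglyMeasurable ?_
    refine Filter.Eventually.of_forall fun ω => ?_
    rw [Real.norm_eq_abs, abs_of_nonneg (inv_nonneg.2 (hDpos ω).le)]
    exact inv_le_one_of_one_le₀ (hD1 ω)
  set f : Ω → ℝ := fun ω => Real.sqrt (D ω)
  set g : Ω → ℝ := fun ω => Real.sqrt ((D ω)⁻¹)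
  have hfg : ∀ ω, f ω * g ω = 1 := by
    intro ω
    rw [← Real.sqrt_mul (hDpos ω).le, mul_inv_cancel₀ (hDpos ω).ne', Real.sqrt_one]
  have hpq : Real.HolderConjugate 2 2 := by constructor <;> norm_num
  have hf2 : MemLp f (ENNReal.ofReal 2) P := by
    rw [show ENNReal.ofReal 2 = 2 by norm_num, memLp_two_iff_integrable_sq (hD.sqrt.aestronglyMeasurable)]
    refine hDi.congr ?_
    refine Filter.Eventually.of_forall fun ω => ?_
    exact (Real.sq_sqrt (hDpos ω).le).symm
  have hg2 : MemLp g (ENNReal.ofReal 2) P := by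
    rw [show ENNReal.ofReal 2 = 2 by norm_num, memLp_two_iff_integrable_sq (hinv_meas.sqrt.aestronglyMeasurable)]
    refine hinv_int.congr ?_
    refine Filter.Eventually.of_forall fun ω => ?_
    exact (Real.sq_sqrt (inv_nonneg.2 (hDpos ω).le)).symm
  have hCS := integral_mul_le_Lp_mul_Lq_of_nonneg hpq
    (Filter.Eventually.of_forall fun ω => Real.sqrt_nonneg _)
    (Filter.Eventually.of_forall fun ω => Real.sqrt_nonneg _) hf2 hg2
  have h1 : ∫ ω, f ω * g ω ∂P = 1 := by
    simp only [hfg]; simp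
  rw [h1] at hCS
  have hf2eq : ∫ ω, f ω ^ (2:ℝ) ∂P = ∫ ω, D ω ∂P := by
    refine integral_congr_ae (Filter.Eventually.of_forall fun ω => ?_)
    simp only [Real.rpow_two]
    exact Real.sq_sqrt (hDpos ω).le
  have hg2eq : ∫ ω, g ω ^ (2:ℝ) ∂P = ∫ ω, (D ω)⁻¹ ∂P := by
    refine integral_congr_ae (Filter.Eventually.of_forall fun ω => ?_)
    simp only [Real.rpow_two]
    exact Real.sq_sqrt (inv_nonneg.2 (hDpos ω).le)
  rw [hf2eq, hg2eq] at hCS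
  have hDint_pos : 0 < ∫ ω, D ω ∂P := by
    calc (0:ℝ) < 1 := one_pos
    _ = ∫ _ : Ω, (1:ℝ) ∂P := by simp
    _ ≤ ∫ ω, D ω ∂P := integral_mono (integrable_const 1) hDi hD1
  have hinvint_nonneg : 0 ≤ ∫ ω, (D ω)⁻¹ ∂P :=
    integral_nonneg fun ω => inv_nonneg.2 (hDpos ω).le
  rw [inv_le_iff_one_le_mul₀ hDint_pos]
  calc (1:ℝ) = 1 * 1 := by ring
  _ ≤ ((∫ ω, D ω ∂P) ^ (1/2:ℝ) * (∫ ω, (D ω)⁻¹ ∂P) ^ (1/2:ℝ)) ^ 2 := by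
      nlinarith [hCS]
  _ = (∫ ω, D ω ∂P) * ∫ ω, (D ω)⁻¹ ∂P := by
      rw [mul_pow, ← Real.rpow_natCast _ 2, ← Real.rpow_natCast ((∫ ω, (D ω)⁻¹ ∂P) ^ (1/2:ℝ)) 2,
        ← Real.rpow_mul hDint_pos.le, ← Real.rpow_mul hinvint_nonneg]
      norm_num
  _ = (∫ ω, (D ω)⁻¹ ∂P) * ∫ ω, D ω ∂P := mul_comm _ _

set_option maxHeartbeats 1000000 in
/-- For softmax probabilities with random Gaussian coefficients (encoded via
the Gaussian moment generating function), the expectation `E[π_h]` is bounded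
below by `E^{lb}(π_h) = exp(β̂'v_h) / ∑_i exp(β̂'v_i + ½(v_i − v_h)'S(v_i − v_h))`. -/
theorem expectation_softmax_lower_bound (m n : ℕ) (v : Fin n → (Fin m → ℝ)) (h : Fin n)
    (Ω : Type*) [MeasureSpace Ω] (P : Measure Ω) [IsProbabilityMeasure P]
    (β : Ω → (Fin m → ℝ)) (hβ : Measurable β) (βhat : Fin m → ℝ)
    (S : Matrix (Fin m) (Fin m) ℝ)
    (hInt : ∀ u : Fin m → ℝ, Integrable (fun ω => Real.exp (β ω ⬝ᵥ u)) P)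
    (hmgf : ∀ u : Fin m → ℝ,
      ∫ ω, Real.exp (β ω ⬝ᵥ u) ∂P = Real.exp (βhat ⬝ᵥ u + (1/2) * (u ⬝ᵥ S.mulVec u))) :
    ∫ ω, (Real.exp (β ω ⬝ᵥ v h) / ∑ i : Fin n, Real.exp (β ω ⬝ᵥ v i)) ∂P ≥
      Real.exp (βhat ⬝ᵥ v h) /
        ∑ i : Fin n, Real.exp (βhat ⬝ᵥ v i +
          (1/2) * ((v i - v h) ⬝ᵥ S.mulVec (v i - v h))) := by
  set u : Fin n → (Fin m → ℝ) := fun i => v i - v h with hu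
  set c : Fin n → ℝ := fun i => (1/2) * (u i ⬝ᵥ S.mulVec (u i)) with hc
  set D : Ω → ℝ := fun ω => ∑ i : Fin n, Real.exp (β ω ⬝ᵥ u i) with hDdef
  have hdotmeas : ∀ w : Fin m → ℝ, Measurable fun ω => β ω ⬝ᵥ w := by
    intro w
    simp only [dotProduct]
    exact Finset.measurable_sum _ fun j _ => ((measurable_pi_apply j).comp hβ).mul_const _
  have hDmeas : Measurable D :=
    Finset.measurable_sum _ fun i _ => (hdotmeas (u i)).exp
  have hD1 : ∀ ω, 1 ≤ D ω := by
    intro ω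
    have h0 : β ω ⬝ᵥ u h = 0 := by simp [hu]
    calc (1:ℝ) = Real.exp (β ω ⬝ᵥ u h) := by rw [h0, Real.exp_zero]
    _ ≤ D ω := Finset.single_le_sum (f := fun i => Real.exp (β ω ⬝ᵥ u i)) (fun i _ => (Real.exp_pos _).le) (Finset.mem_univ h)
  have hDpos : ∀ ω, 0 < D ω := fun ω => lt_of_lt_of_le one_pos (hD1 ω)
  have hDi : Integrable D P := integrable_finset_sum _ fun i _ => hInt (u i)
  have key := jensen_inv_aux P D hDmeas hD1 hDi
  have hvadd : ∀ (w : Fin m → ℝ) (i : Fin n), w ⬝ᵥ u i + w ⬝ᵥ v h = w ⬝ᵥ v i := by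
    intro w i
    rw [← dotProduct_add]
    simp [hu]
  have hLHS : ∫ ω, (Real.exp (β ω ⬝ᵥ v h) / ∑ i : Fin n, Real.exp (β ω ⬝ᵥ v i)) ∂P
      = ∫ ω, (D ω)⁻¹ ∂P := by
    refine integral_congr_ae (Filter.Eventually.of_forall fun ω => ?_)
    show Real.exp (β ω ⬝ᵥ v h) / (∑ i : Fin n, Real.exp (β ω ⬝ᵥ v i)) = (D ω)⁻¹
    have hsum : ∑ i : Fin n, Real.exp (β ω ⬝ᵥ v i) = D ω * Real.exp (β ω ⬝ᵥ v h) := by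
      rw [hDdef, Finset.sum_mul]
      refine Finset.sum_congr rfl fun i _ => ?_
      rw [← Real.exp_add, hvadd]
    rw [hsum, mul_comm, div_mul_cancel_left₀ (Real.exp_ne_zero _)]
  have hInt2 : ∫ ω, D ω ∂P = ∑ i : Fin n, Real.exp (βhat ⬝ᵥ u i + c i) := by
    rw [hDdef, integral_finset_sum _ fun i _ => hInt (u i)]
    exact Finset.sum_congr rfl fun i _ => hmgf (u i)
  have hRHS : Real.exp (βhat ⬝ᵥ v h) /
        ∑ i : Fin n, Real.exp (βhat ⬝ᵥ v i +
          (1/2) * ((v i - v h) ⬝ᵥ S.mulVec (v i - v h)))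
      = (∫ ω, D ω ∂P)⁻¹ := by
    rw [hInt2]
    have hsum : ∑ i : Fin n, Real.exp (βhat ⬝ᵥ v i +
          (1/2) * ((v i - v h) ⬝ᵥ S.mulVec (v i - v h)))
        = (∑ i : Fin n, Real.exp (βhat ⬝ᵥ u i + c i)) * Real.exp (βhat ⬝ᵥ v h) := by
      rw [Finset.sum_mul]
      refine Finset.sum_congr rfl fun i _ => ?_
      rw [← Real.exp_add]
      congr 1
      have := hvadd βhat i
      simp only [hc, hu]
      linarith [hvadd βhat i]
    rw [hsum, mul_comm, div_mul_cancel_left₀ (Real.exp_ne_zero _)]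
  rw [ge_iff_le, hLHS, hRHS]
  exact key
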